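/- Let A be a dilation matrix for ℤ^n. Then there exists a positive integer β ≥ 1 such that A^β yields a radix representation of ℤ^n with digit set D_β = A^β([-1/2,1/2)^n) ∩ ℤ^n. -/

import Mathlib

open MeasureTheory Set

/-- `A` is a dilation matrix: an integer matrix all of whose complex
eigenvalues have absolute value greater than 1. -/
def IsDilation {n : ℕ} (A : Matrix (Fin n) (Fin n) ℤ) : Prop :=
  ∀ μ ∈ spectrum ℂ (A.map (Int.cast : ℤ → ℂ)), 1 < ‖μ‖

/-- `D` is a complete set of coset representatives of `ℤ^n / A(ℤ^n)`. -/
def IsDigitSet {n : ℕ} (A : Matrix (Fin n) (Fin n) ℤ) (D : Set (Fin n → ℤ)) : Prop :=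
  ∀ x : Fin n → ℤ, ∃! d : Fin n → ℤ, d ∈ D ∧ ∃ y : Fin n → ℤ, x = A.mulVec y + d

/-- The real matrix corresponding to an integer matrix. -/
noncomputable def realMat {n : ℕ} (A : Matrix (Fin n) (Fin n) ℤ) :
    Matrix (Fin n) (Fin n) ℝ :=
  A.map (Int.cast : ℤ → ℝ)

/-- Cast an integer vector to a real vector. -/
def castVec {n : ℕ} (d : Fin n → ℤ) : Fin n → ℝ := fun i => (d i : ℝ)

/-- The self-affine set `T(A,D) = { Σ_{j=1}^∞ A^{-j} d_j : d_j ∈ D }`. -/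
noncomputable def Tile {n : ℕ} (A : Matrix (Fin n) (Fin n) ℤ) (D : Set (Fin n → ℤ)) :
    Set (Fin n → ℝ) :=
  { x | ∃ f : ℕ → (Fin n → ℤ), (∀ j, f j ∈ D) ∧
      HasSum (fun j => ((realMat A)⁻¹ ^ (j + 1)).mulVec (castVec (f j))) x }

/-- `A` yields a radix representation with digit set `D`: every integer vector is
a finite sum `Σ_{j=0}^N A^j d_j` with digits in `D`. -/
def YieldsRadix {n : ℕ} (A : Matrix (Fin n) (Fin n) ℤ) (D : Set (Fin n → ℤ)) : Prop :=
  ∀ x : Fin n → ℤ, ∃ N : ℕ, ∃ d : ℕ → (Fin n → ℤ), (∀ j ≤ N, d j ∈ D) ∧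
    x = ∑ j ∈ Finset.range (N + 1), (A ^ j).mulVec (d j)

/-- The canonical fundamental domain `F = [-1/2, 1/2)^n`. -/
def Fdom (n : ℕ) : Set (Fin n → ℝ) :=
  Set.univ.pi fun _ => Set.Ico (-(1/2) : ℝ) (1/2)

/-- The digit set `A(F) ∩ ℤ^n`, viewed as a set of integer vectors. -/
noncomputable def digitF {n : ℕ} (A : Matrix (Fin n) (Fin n) ℤ) : Set (Fin n → ℤ) :=
  { d : Fin n → ℤ | castVec d ∈ (fun v => (realMat A).mulVec v) '' Fdom n }

/-- Multiplication of a Euclidean-space vector by a real matrix,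
landing in Euclidean space (so that norms are the `ℓ²` norms). -/
noncomputable def mulVecE {n : ℕ} (B : Matrix (Fin n) (Fin n) ℝ)
    (v : EuclideanSpace ℝ (Fin n)) : EuclideanSpace ℝ (Fin n) :=
  (WithLp.equiv 2 (Fin n → ℝ)).symm (B.mulVec ((WithLp.equiv 2 (Fin n → ℝ)) v))

/-- The smallest singular value of `A` is greater than `c`: equivalently,
`‖Av‖ > c` for every unit vector `v` (Euclidean norm). -/
noncomputable def MinSingValGT {n : ℕ} (A : Matrix (Fin n) (Fin n) ℤ) (c : ℝ) : Prop :=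
  ∀ v : EuclideanSpace ℝ (Fin n), ‖v‖ = 1 → c < ‖mulVecE (realMat A) v‖

/-- Vectors expressible by a radix expansion of length at most `k`. -/
def DAk {n : ℕ} (A : Matrix (Fin n) (Fin n) ℤ) (D : Set (Fin n → ℤ)) (k : ℕ) :
    Set (Fin n → ℤ) :=
  { x : Fin n → ℤ | ∃ d : ℕ → (Fin n → ℤ), (∀ j < k, d j ∈ D) ∧
      x = ∑ j ∈ Finset.range k, (A ^ j).mulVec (d j) }

/-- `T` tiles `ℝ^n` under translation by `ℤ^n`. -/
def TilesRn {n : ℕ} (T : Set (Fin n → ℝ)) : Prop :=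
  (⋃ k : Fin n → ℤ, (fun x => x + castVec k) '' T) = Set.univ ∧
  ∀ k₁ k₂ : Fin n → ℤ, k₁ ≠ k₂ →
    volume (((fun x => x + castVec k₁) '' T) ∩ ((fun x => x + castVec k₂) '' T)) = 0

/-!
Dividing `x ∈ ℤ^n` by `B` with remainder — round `B⁻¹x` coordinatewise to `y ∈ ℤ^n`, so that
`B⁻¹x - y ∈ F = [-1/2, 1/2)^n` — gives `x = B y + d` with `d ∈ B(F) ∩ ℤ^n` and
`‖y‖ ≤ ‖B⁻¹‖ ‖x‖ + 1/2` in the sup norm and its operator norm. As soon as `‖B⁻¹‖ < 1/2`, the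
integer vector `y` is strictly shorter than `x` unless `x = 0`, so repeated division terminates
and yields a finite radix expansion. For `B = A^β` this holds for large `β`: the eigenvalues of
`A⁻¹` lie in the open unit disc, so `(A⁻¹)^β → 0` by Gelfand's formula.
-/

open Filter Topology Matrix

theorem tendsto_pow_nhds_zero_of_spectralRadius_lt_one {𝔸 : Type*} [NormedRing 𝔸]
    [NormedAlgebra ℂ 𝔸] [CompleteSpace 𝔸] {a : 𝔸} (ha : spectralRadius ℂ a < 1) :
    Tendsto (fun k : ℕ => a ^ k) atTop (𝓝 0) := by
  obtain ⟨r, hρr, hr1⟩ := ENNReal.lt_iff_exists_nnreal_btwn.mp ha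
  have hbound : ∀ᶠ k : ℕ in atTop, ‖a ^ k‖ ≤ (r : ℝ) ^ k := by
    have hgelfand := spectrum.pow_nnnorm_pow_one_div_tendsto_nhds_spectralRadius a
    filter_upwards [hgelfand.eventually_lt_const hρr, eventually_gt_atTop 0] with k hk hk0
    rw [one_div, ENNReal.rpow_inv_lt_iff (by positivity), ENNReal.rpow_natCast] at hk
    exact_mod_cast hk.le
  exact squeeze_zero_norm' hbound
    (tendsto_pow_atTop_nhds_zero_of_lt_one r.2 (by exact_mod_cast hr1))

theorem RingHom.mapMatrix_nonsing_inv {m K L : Type*} [Fintype m] [DecidableEq m] [Field K]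
    [Field L] (f : K →+* L) (M : Matrix m m K) : f.mapMatrix M⁻¹ = (f.mapMatrix M)⁻¹ := by
  rw [Matrix.inv_def, Matrix.inv_def, Ring.inverse_eq_inv', Ring.inverse_eq_inv',
    ← RingHom.map_adjugate, ← RingHom.map_det, ← map_inv₀]
  ext i j
  simp

section MatrixNorm

attribute [local instance] Matrix.linftyOpSeminormedAddCommGroup Matrix.linftyOpNormedRing
  Matrix.linftyOpNormedAlgebra

theorem Matrix.linfty_opNorm_map {m n α β : Type*} [Fintype m] [Fintype n]
    [SeminormedAddCommGroup α] [SeminormedAddCommGroup β] (M : Matrix m n α) {f : α → β}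
    (hf : ∀ a, ‖f a‖ = ‖a‖) : ‖M.map f‖ = ‖M‖ := by
  have hf' : ∀ a, ‖f a‖₊ = ‖a‖₊ := fun a => NNReal.eq (hf a)
  simp only [Matrix.linfty_opNorm_def, Matrix.map_apply, hf']

variable {n : ℕ}

theorem realMat_pow (A : Matrix (Fin n) (Fin n) ℤ) (k : ℕ) : realMat (A ^ k) = realMat A ^ k :=
  map_pow (Int.castRingHom ℝ).mapMatrix A k

theorem ofRealHom_mapMatrix_realMat (A : Matrix (Fin n) (Fin n) ℤ) :
    Complex.ofRealHom.mapMatrix (realMat A) = A.map (Int.cast : ℤ → ℂ) := by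
  ext i j
  simp [realMat]

namespace IsDilation

variable {A : Matrix (Fin n) (Fin n) ℤ}

theorem isUnit (hA : IsDilation A) : IsUnit (A.map (Int.cast : ℤ → ℂ)) := by
  rw [← spectrum.zero_notMem_iff ℂ]
  intro h0
  exact absurd (hA 0 h0) (by simp)

theorem isUnit_realMat (hA : IsDilation A) : IsUnit (realMat A) := by
  rw [Matrix.isUnit_iff_isUnit_det, isUnit_iff_ne_zero]
  intro h
  have hdet := (Matrix.isUnit_iff_isUnit_det _).mp hA.isUnit
  rw [← ofRealHom_mapMatrix_realMat, ← RingHom.map_det, h, map_zero] at hdet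
  exact not_isUnit_zero hdet

theorem spectralRadius_inv_lt_one (hA : IsDilation A) :
    spectralRadius ℂ (A.map (Int.cast : ℤ → ℂ))⁻¹ < 1 := by
  have hspec : ∀ z ∈ spectrum ℂ (A.map (Int.cast : ℤ → ℂ))⁻¹, ‖z‖₊ < 1 := by
    intro z hz
    rw [← hA.isUnit.unit_spec, ← Matrix.coe_units_inv, ← spectrum.map_inv, Set.mem_inv] at hz
    have h := hA _ hz
    rw [norm_inv, one_lt_inv_iff₀] at h
    exact_mod_cast h.2
  rcases (spectrum ℂ (A.map (Int.cast : ℤ → ℂ))⁻¹).eq_empty_or_nonempty with h | h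
  · simp [spectralRadius, h]
  · exact_mod_cast spectrum.spectralRadius_lt_of_forall_lt_of_nonempty h hspec

theorem tendsto_norm_inv_realMat_pow (hA : IsDilation A) :
    Tendsto (fun k : ℕ => ‖(realMat (A ^ k))⁻¹‖) atTop (𝓝 0) := by
  have hnorm : ∀ k : ℕ, ‖(realMat (A ^ k))⁻¹‖ = ‖(A.map (Int.cast : ℤ → ℂ))⁻¹ ^ k‖ := by
    intro k
    rw [realMat_pow, ← Matrix.inv_pow', ← ofRealHom_mapMatrix_realMat,
      ← RingHom.mapMatrix_nonsing_inv, ← map_pow, RingHom.mapMatrix_apply]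
    exact (Matrix.linfty_opNorm_map _ fun x => Complex.norm_real x).symm
  simpa only [hnorm, norm_zero] using
    (tendsto_pow_nhds_zero_of_spectralRadius_lt_one hA.spectralRadius_inv_lt_one).norm

end IsDilation

theorem castVec_sub (a b : Fin n → ℤ) : castVec (a - b) = castVec a - castVec b := by
  funext i
  simp [castVec]

theorem castVec_mulVec (B : Matrix (Fin n) (Fin n) ℤ) (y : Fin n → ℤ) :
    castVec (B *ᵥ y) = realMat B *ᵥ castVec y := by
  funext i
  simp [castVec, realMat, Matrix.mulVec, dotProduct]

theorem norm_castVec (x : Fin n → ℤ) : ‖castVec x‖ = ‖x‖ := by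
  have h : ∀ m : ℤ, ‖(m : ℝ)‖₊ = ‖m‖₊ := fun m => NNReal.eq (Int.norm_cast_real m)
  simp [castVec, Pi.norm_def, h]

theorem norm_round_le {ι : Type*} [Fintype ι] (v : ι → ℝ) :
    ‖fun i => round (v i)‖ ≤ ‖v‖ + 1 / 2 := by
  refine (pi_norm_le_iff_of_nonneg (by positivity)).2 fun i => ?_
  calc ‖round (v i)‖ = |v i - (v i - round (v i))| := by
        rw [sub_sub_cancel, ← Int.norm_cast_real, Real.norm_eq_abs]
    _ ≤ |v i| + |v i - round (v i)| := abs_sub _ _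
    _ ≤ ‖v‖ + 1 / 2 := add_le_add (norm_le_pi_norm v i) (abs_sub_round _)

theorem norm_le_natCast_of_lt_add_one {ι : Type*} [Fintype ι] {y : ι → ℤ} {m : ℕ}
    (h : ‖y‖ < m + 1) : ‖y‖ ≤ m := by
  refine (pi_norm_le_iff_of_nonneg m.cast_nonneg).2 fun i => ?_
  have hi := (pi_norm_lt_iff (by positivity)).1 h i
  rw [Int.norm_eq_abs] at hi ⊢
  have hi' : |y i| < m + 1 := by exact_mod_cast hi
  exact_mod_cast Int.le_of_lt_add_one hi'

theorem exists_eq_mulVec_add_digitF {B : Matrix (Fin n) (Fin n) ℤ} (hB : IsUnit (realMat B))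
    (x : Fin n → ℤ) : ∃ y d, d ∈ digitF B ∧ x = B *ᵥ y + d ∧
      ‖y‖ ≤ ‖(realMat B)⁻¹‖ * ‖x‖ + 1 / 2 := by
  set z := (realMat B)⁻¹ *ᵥ castVec x
  set y : Fin n → ℤ := fun i => round (z i)
  refine ⟨y, x - B *ᵥ y, ⟨z - castVec y, ?_, ?_⟩, by abel, ?_⟩
  · refine Set.mem_univ_pi.2 fun i => ?_
    have h := round_eq_iff.1 (rfl : round (z i) = y i)
    simp only [Pi.sub_apply, castVec, Set.mem_Ico] at h ⊢
    constructor <;> linarith [h.1, h.2]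
  · have hinv := Matrix.mul_nonsing_inv _ ((Matrix.isUnit_iff_isUnit_det _).1 hB)
    simp only [z, Matrix.mulVec_sub, Matrix.mulVec_mulVec, hinv, Matrix.one_mulVec, castVec_sub,
      castVec_mulVec]
  · calc ‖y‖ ≤ ‖z‖ + 1 / 2 := norm_round_le z
      _ ≤ ‖(realMat B)⁻¹‖ * ‖x‖ + 1 / 2 := by
        gcongr
        simpa only [norm_castVec] using Matrix.linfty_opNorm_mulVec (realMat B)⁻¹ (castVec x)

theorem mulVec_add_mem_DAk_succ {B : Matrix (Fin n) (Fin n) ℤ} {D : Set (Fin n → ℤ)}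
    {y d : Fin n → ℤ} {k : ℕ} (hy : y ∈ DAk B D k) (hd : d ∈ D) :
    B *ᵥ y + d ∈ DAk B D (k + 1) := by
  obtain ⟨e, he, rfl⟩ := hy
  refine ⟨fun j => Nat.casesOn j d e, fun j hj => ?_, ?_⟩
  · cases j with
    | zero => exact hd
    | succ j => exact he j (by omega)
  · rw [Finset.sum_range_succ', Matrix.mulVec_sum]
    simp [Matrix.mulVec_mulVec, pow_succ']

theorem yieldsRadix_of_forall_mem_DAk {B : Matrix (Fin n) (Fin n) ℤ} {D : Set (Fin n → ℤ)}
    (hdiv : ∀ x, ∃ y, ∃ d ∈ D, x = B *ᵥ y + d) (hfin : ∀ y, ∃ k, y ∈ DAk B D k) :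
    YieldsRadix B D := by
  intro x
  obtain ⟨y, d, hd, rfl⟩ := hdiv x
  obtain ⟨k, hk⟩ := hfin y
  obtain ⟨e, he, heq⟩ := mulVec_add_mem_DAk_succ hk hd
  exact ⟨k, e, fun j hj => he j (Nat.lt_succ_of_le hj), heq⟩

theorem yieldsRadix_digitF_of_norm_inv_lt {B : Matrix (Fin n) (Fin n) ℤ}
    (hB : IsUnit (realMat B)) (hnorm : ‖(realMat B)⁻¹‖ < 1 / 2) : YieldsRadix B (digitF B) := by
  choose q r hr hqr hq using exists_eq_mulVec_add_digitF hB
  have hfin : ∀ m : ℕ, ∀ x, ‖x‖ ≤ m → ∃ k, x ∈ DAk B (digitF B) k := by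
    intro m
    induction m with
    | zero =>
      intro x hx
      rw [Nat.cast_zero, norm_le_zero_iff] at hx
      exact ⟨0, fun _ => 0, by simp, by simp [hx]⟩
    | succ m ih =>
      intro x hx
      have hqm : ‖q x‖ ≤ m := by
        refine norm_le_natCast_of_lt_add_one ((hq x).trans_lt ?_)
        push_cast at hx
        nlinarith [norm_nonneg (realMat B)⁻¹, norm_nonneg x]
      obtain ⟨k, hk⟩ := ih (q x) hqm
      exact ⟨k + 1, hqr x ▸ mulVec_add_mem_DAk_succ hk (hr x)⟩
  exact yieldsRadix_of_forall_mem_DAk (fun x => ⟨q x, r x, hr x, hqr x⟩)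
    fun x => hfin _ x (Nat.le_ceil _)

end MatrixNorm

/-- some power of a dilation matrix yields a radix representation. -/
theorem stmt_5 {n : ℕ} (A : Matrix (Fin n) (Fin n) ℤ) (hA : IsDilation A) :
    ∃ β : ℕ, 1 ≤ β ∧ YieldsRadix (A ^ β) (digitF (A ^ β)) := by
  obtain ⟨β, hβ, hsmall⟩ := ((eventually_ge_atTop 1).and
    (hA.tendsto_norm_inv_realMat_pow.eventually (gt_mem_nhds one_half_pos))).exists
  refine ⟨β, hβ, yieldsRadix_digitF_of_norm_inv_lt ?_ hsmall⟩
  rw [realMat_pow]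
  exact hA.isUnit_realMat.pow β
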